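/- arXiv:1705.11127 — 4 statements merged into one kernel-verified Lean document; each statement's English description precedes it below -/
import Mathlib

section
/- Let p be prime, M a divisor of p-1, and M a multiplicative subgroup of U_p of order M. For any x, y ∈ C^p, Σ_{m∈M} Σ_{k∈Z_p} |⟨x, T_k D_m y⟩|² = p ( M |ŷ(0)|² |x̂(0)|² + (Σ_{m∈M} |ŷ(m)|²)(Σ_{ℓ∈M} |x̂(ℓ)|²) + Σ_{ℓ∈U_p∖M} γ_ℓ(y,M) |x̂(ℓ)|² ), where γ_ℓ(y,M) = Σ_{m∈M} |ŷ(mℓ)|². -/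
open scoped BigOperators Classical Pointwise
open Finset

noncomputable section

/-- Translation operator on C^p. -/
def Tr {p : ℕ} (k : ZMod p) (x : ZMod p → ℂ) : ZMod p → ℂ := fun j => x (j - k)

/-- Cyclic dilation operator on C^p. -/
def Dil {p : ℕ} (m : ZMod p) (x : ZMod p → ℂ) : ZMod p → ℂ := fun j => x (m⁻¹ * j)

/-- Unitary discrete Fourier transform on C^p. -/
def dft (p : ℕ) [NeZero p] (x : ZMod p → ℂ) : ZMod p → ℂ := fun ℓ =>
  (Real.sqrt p : ℂ)⁻¹ *
    ∑ k : ZMod p, x k * Complex.exp (-(2 * Real.pi * Complex.I * (ℓ.val * k.val)) / p)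

/-- Inner product on C^p. -/
def ip (p : ℕ) [NeZero p] (x y : ZMod p → ℂ) : ℂ :=
  ∑ g : ZMod p, x g * (starRingEnd ℂ) (y g)

/-! The function `k ↦ ⟨x, T_k z⟩` is a correlation, so its unnormalised Fourier transform
(`𝓕 = ZMod.dft`, with `dft p = p^{-1/2} 𝓕`) is `𝓕x · conj 𝓕z`; Parseval then gives
`∑_k |⟨x, T_k z⟩|² = p ∑_ℓ |x̂(ℓ)|² |ẑ(ℓ)|²`. Dilation by a unit `m` acts on the Fourier side as
`ŷ ↦ ŷ(m ·)`, so summing over `m ∈ M` produces `p ∑_ℓ γ_ℓ |x̂(ℓ)|²`. Finally split `ℓ ∈ ℤ/p` into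
`0`, the units in `M` and the units outside `M`: `γ_0 = |M| |ŷ(0)|²`, and `γ_ℓ` is constant on `M`
because `m ↦ mℓ` permutes `M`. -/

open ZMod (stdAddChar)
open scoped ZMod ComplexConjugate

theorem sum_eq_add_sum_units {G₀ β : Type*} [GroupWithZero G₀] [Fintype G₀] [Fintype G₀ˣ]
    [AddCommMonoid β] (f : G₀ → β) : ∑ a, f a = f 0 + ∑ u : G₀ˣ, f u := by
  rw [← Finset.add_sum_erase _ _ (mem_univ 0)]
  congr 1
  exact (Finset.sum_subtype (univ.erase 0) (by simp) f).trans
    (Fintype.sum_equiv unitsEquivNeZero.symm _ _ fun _ => rfl)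

theorem Fintype.sum_eq_sum_subtype_add_sum_filter_not {α β : Type*} [Fintype α] [AddCommMonoid β]
    (P : α → Prop) [DecidablePred P] [Fintype {a // P a}] (f : α → β) :
    ∑ a, f a = ∑ a : {a // P a}, f a + ∑ a ∈ univ.filter (fun a => ¬P a), f a := by
  rw [← sum_filter_add_sum_filter_not univ P, Finset.sum_subtype (p := P) _ (by simp)]

theorem Subgroup.sum_mul_right_of_mem {G β : Type*} [Group G] [AddCommMonoid β] (H : Subgroup G)
    [Fintype H] (f : G → β) {g : G} (hg : g ∈ H) : ∑ h : H, f (h * g) = ∑ h : H, f h :=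
  Fintype.sum_equiv (Equiv.mulRight ⟨g, hg⟩) _ _ fun _ => rfl

namespace ZMod

variable {N : ℕ} [NeZero N]

theorem sum_stdAddChar_mul (a : ZMod N) :
    ∑ ℓ, stdAddChar (ℓ * a) = if a = 0 then (N : ℂ) else 0 := by
  rw [AddChar.sum_mulShift _ (isPrimitive_stdAddChar N), ZMod.card, apply_ite Nat.cast,
    Nat.cast_zero]

theorem sum_dft_mul_conj_dft (f g : ZMod N → ℂ) :
    ∑ ℓ, 𝓕 f ℓ * conj (𝓕 g ℓ) = N * ∑ k, f k * conj (g k) := by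
  calc ∑ ℓ, 𝓕 f ℓ * conj (𝓕 g ℓ)
      = ∑ j, ∑ k, f j * conj (g k) * ∑ ℓ, stdAddChar (ℓ * (k - j)) := by
        simp only [dft_apply, smul_eq_mul, map_sum, map_mul, ← AddChar.map_neg_eq_conj,
          sum_mul_sum]
        simp only [mul_sum]
        rw [sum_comm]
        refine sum_congr rfl fun j _ => ?_
        rw [sum_comm]
        refine sum_congr rfl fun k _ => sum_congr rfl fun ℓ _ => ?_
        rw [show ℓ * (k - j) = -(j * ℓ) + -(-(k * ℓ)) by ring, AddChar.map_add_eq_mul]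
        ring
    _ = N * ∑ k, f k * conj (g k) := by
        simp [sum_stdAddChar_mul, sub_eq_zero, mul_sum, mul_comm]

theorem sum_norm_sq_dft (f : ZMod N → ℂ) :
    ∑ ℓ, ‖𝓕 f ℓ‖ ^ 2 = N * ∑ k, ‖f k‖ ^ 2 := by
  have h := sum_dft_mul_conj_dft f f
  simp only [Complex.mul_conj'] at h
  exact_mod_cast h

end ZMod

section

variable {N : ℕ} [NeZero N]

theorem dft_eq_inv_sqrt_mul_dft (x : ZMod N → ℂ) (ℓ : ZMod N) :
    dft N x ℓ = (Real.sqrt N : ℂ)⁻¹ * 𝓕 x ℓ := by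
  rw [dft, ZMod.dft_apply]
  congr 1
  refine sum_congr rfl fun k _ => ?_
  have hval : -(k * ℓ) = ((-(k.val * ℓ.val : ℤ) : ℤ) : ZMod N) := by simp
  rw [smul_eq_mul, mul_comm, hval, ZMod.stdAddChar_coe]
  congr 2
  push_cast
  ring

theorem norm_sq_dft (x : ZMod N → ℂ) (ℓ : ZMod N) :
    ‖dft N x ℓ‖ ^ 2 = ‖𝓕 x ℓ‖ ^ 2 / N := by
  rw [dft_eq_inv_sqrt_mul_dft, norm_mul, norm_inv, Complex.norm_real, mul_pow, inv_pow,
    Real.norm_eq_abs, sq_abs, Real.sq_sqrt (Nat.cast_nonneg N), inv_mul_eq_div]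

theorem dft_dil (m : (ZMod N)ˣ) (y : ZMod N → ℂ) (ℓ : ZMod N) :
    dft N (Dil m y) ℓ = dft N y (m * ℓ) := by
  have hdil : Dil (m : ZMod N) y = fun j => y ((m⁻¹ : (ZMod N)ˣ) * j) := by
    ext j
    rw [Dil, ZMod.inv_coe_unit]
  rw [dft_eq_inv_sqrt_mul_dft, dft_eq_inv_sqrt_mul_dft, hdil, ZMod.dft_comp_unitMul, inv_inv]

theorem dft_ip_tr (x z : ZMod N → ℂ) (ℓ : ZMod N) :
    𝓕 (fun k => ip N x (Tr k z)) ℓ = 𝓕 x ℓ * conj (𝓕 z ℓ) := by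
  simp only [ZMod.dft_apply, ip, Tr, smul_eq_mul, map_sum, map_mul, ← AddChar.map_neg_eq_conj,
    sum_mul_sum]
  simp only [mul_sum]
  rw [sum_comm]
  refine sum_congr rfl fun g _ => Fintype.sum_equiv (Equiv.subLeft g) _ _ fun k => ?_
  rw [Equiv.subLeft_apply, show -(k * ℓ) = -(g * ℓ) + -(-((g - k) * ℓ)) by ring,
    AddChar.map_add_eq_mul]
  ring

theorem sum_norm_sq_ip_tr (x z : ZMod N → ℂ) :
    ∑ k, ‖ip N x (Tr k z)‖ ^ 2 = N * ∑ ℓ, ‖dft N x ℓ‖ ^ 2 * ‖dft N z ℓ‖ ^ 2 := by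
  have hN : (N : ℝ) ≠ 0 := Nat.cast_ne_zero.2 (NeZero.ne N)
  have key : N * ∑ k, ‖ip N x (Tr k z)‖ ^ 2 = ∑ ℓ, ‖𝓕 x ℓ‖ ^ 2 * ‖𝓕 z ℓ‖ ^ 2 := by
    simp only [← ZMod.sum_norm_sq_dft, dft_ip_tr, norm_mul, Complex.norm_conj, mul_pow]
  apply mul_left_cancel₀ hN
  rw [key, mul_sum, mul_sum]
  refine sum_congr rfl fun ℓ _ => ?_
  rw [norm_sq_dft, norm_sq_dft]
  field_simp

end

theorem wavelet_norm_formula_general {p : ℕ} [Fact p.Prime]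
    (M : Subgroup (ZMod p)ˣ) (x y : ZMod p → ℂ) :
    ∑ m : M, ∑ k : ZMod p, ‖ip p x (Tr k (Dil ((m : (ZMod p)ˣ) : ZMod p) y))‖ ^ 2 =
      p * ((Fintype.card M : ℝ) * ‖dft p y 0‖ ^ 2 * ‖dft p x 0‖ ^ 2 +
        (∑ m : M, ‖dft p y ((m : (ZMod p)ˣ) : ZMod p)‖ ^ 2) *
          (∑ ℓ : M, ‖dft p x ((ℓ : (ZMod p)ˣ) : ZMod p)‖ ^ 2) +
        ∑ ℓ ∈ Finset.univ.filter (fun ℓ : (ZMod p)ˣ => ℓ ∉ M),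
          (∑ m : M, ‖dft p y ((((m : (ZMod p)ˣ) * ℓ : (ZMod p)ˣ)) : ZMod p)‖ ^ 2) *
            ‖dft p x ((ℓ : (ZMod p)ˣ) : ZMod p)‖ ^ 2) := by
  set γ : ZMod p → ℝ := fun ℓ => ∑ m : M, ‖dft p y ((m : (ZMod p)ˣ) * ℓ)‖ ^ 2
  have hγ_zero : γ 0 = Fintype.card M * ‖dft p y 0‖ ^ 2 := by simp [γ]
  have hγ_mem : ∀ ℓ ∈ M, γ ℓ = ∑ m : M, ‖dft p y ((m : (ZMod p)ˣ) : ZMod p)‖ ^ 2 :=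
    fun ℓ hℓ => by
      simpa [γ] using Subgroup.sum_mul_right_of_mem M (fun u => ‖dft p y (u : ZMod p)‖ ^ 2) hℓ
  calc _ = p * ∑ ℓ, γ ℓ * ‖dft p x ℓ‖ ^ 2 := by
        simp only [sum_norm_sq_ip_tr, dft_dil, ← mul_sum, γ, sum_mul]
        rw [sum_comm]
        simp only [mul_comm]
    _ = p * (γ 0 * ‖dft p x 0‖ ^ 2 +
          (∑ ℓ : M, γ (ℓ : (ZMod p)ˣ) * ‖dft p x (ℓ : (ZMod p)ˣ)‖ ^ 2 +
            ∑ ℓ ∈ univ.filter (fun ℓ : (ZMod p)ˣ => ℓ ∉ M), γ ℓ * ‖dft p x ℓ‖ ^ 2)) := by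
        rw [sum_eq_add_sum_units, Fintype.sum_eq_sum_subtype_add_sum_filter_not (· ∈ M)]
    _ = _ := by
        rw [hγ_zero, sum_congr rfl fun ℓ _ => by rw [hγ_mem _ ℓ.2], ← mul_sum]
        simp only [γ, Units.val_mul]
        ring

theorem wavelet_norm_formula {p : ℕ} [Fact p.Prime]
    (M : Subgroup (ZMod p)ˣ) (hMd : Fintype.card M ∣ p - 1)
    (x y : ZMod p → ℂ) :
    ∑ m : M, ∑ k : ZMod p, ‖ip p x (Tr k (Dil ((m : (ZMod p)ˣ) : ZMod p) y))‖ ^ 2 =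
      p * ((Fintype.card M : ℝ) * ‖dft p y 0‖ ^ 2 * ‖dft p x 0‖ ^ 2 +
        (∑ m : M, ‖dft p y ((m : (ZMod p)ˣ) : ZMod p)‖ ^ 2) *
          (∑ ℓ : M, ‖dft p x ((ℓ : (ZMod p)ˣ) : ZMod p)‖ ^ 2) +
        ∑ ℓ ∈ Finset.univ.filter (fun ℓ : (ZMod p)ˣ => ℓ ∉ M),
          (∑ m : M, ‖dft p y ((((m : (ZMod p)ˣ) * ℓ : (ZMod p)ˣ)) : ZMod p)‖ ^ 2) *
            ‖dft p x ((ℓ : (ZMod p)ˣ) : ZMod p)‖ ^ 2) :=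
  wavelet_norm_formula_general M x y
end
end

section
/- Let p be prime, ε a generator of U_p, M ≤ U_p a subgroup of order M, a = (p-1)/M, and H_t = ε^t M for 0 ≤ t ≤ a-1. Then for any x, y ∈ C^p, Σ_{m∈M} Σ_{k=0}^{p-1} |⟨x, T_k D_m y⟩|² = p ( M |x̂(0)|² |ŷ(0)|² + Σ_{t=0}^{a-1} (Σ_{ℓ∈H_t} |x̂(ℓ)|²)(Σ_{w∈H_t} |ŷ(w)|²) ). -/
open scoped BigOperators Classical Pointwise
open Finset

noncomputable section

namespace WAux

variable {p : ℕ} [NeZero p]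

lemma exp_eq (ℓ k : ZMod p) :
    Complex.exp (-(2 * Real.pi * Complex.I * (ℓ.val * k.val)) / p)
      = ZMod.stdAddChar (-(ℓ * k)) := by
  have h : (((-(ℓ.val * k.val : ℤ)) : ℤ) : ZMod p) = -(ℓ * k) := by
    push_cast [ZMod.natCast_val, ZMod.cast_id]
    ring
  rw [← h, ZMod.stdAddChar_coe]
  congr 1
  push_cast
  ring

lemma dft_eq (x : ZMod p → ℂ) (ℓ : ZMod p) :
    dft p x ℓ = (Real.sqrt p : ℂ)⁻¹ * ∑ k : ZMod p, x k * ZMod.stdAddChar (-(ℓ * k)) := by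
  unfold dft; simp_rw [exp_eq]

lemma conj_std (z : ZMod p) :
    (starRingEnd ℂ) (ZMod.stdAddChar z) = ZMod.stdAddChar (-z) := by
  rw [ZMod.stdAddChar_apply, ZMod.stdAddChar_apply, AddChar.map_neg_eq_inv]
  rw [← Circle.coe_inv_eq_conj]

lemma orth (t : ZMod p) :
    ∑ k : ZMod p, ZMod.stdAddChar (t * k) = if t = 0 then (p : ℂ) else 0 := by
  split_ifs with h
  · simp [h, ZMod.card]
  · exact AddChar.sum_eq_zero_of_ne_one ((ZMod.isPrimitive_stdAddChar p) h)

lemma sqrt_ne : (Real.sqrt p : ℂ) ≠ 0 := by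
  have : (0:ℝ) < Real.sqrt p :=
    Real.sqrt_pos.mpr (by exact_mod_cast Nat.pos_of_ne_zero (NeZero.ne p))
  exact_mod_cast this.ne'

omit [NeZero p] in
lemma sqrt_sq : (Real.sqrt p : ℂ) * (Real.sqrt p : ℂ) = (p : ℂ) := by
  rw [← Complex.ofReal_mul, Real.mul_self_sqrt (by positivity)]
  norm_cast

lemma plancherel (f g : ZMod p → ℂ) :
    ∑ ℓ : ZMod p, dft p f ℓ * (starRingEnd ℂ) (dft p g ℓ)
      = ∑ k : ZMod p, f k * (starRingEnd ℂ) (g k) := by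
  have hpne : (p:ℂ) ≠ 0 := by exact_mod_cast (NeZero.ne p)
  calc
    ∑ ℓ : ZMod p, dft p f ℓ * (starRingEnd ℂ) (dft p g ℓ)
        = ∑ ℓ : ZMod p, (p:ℂ)⁻¹ *
            ∑ k : ZMod p, ∑ j : ZMod p,
              (f k * (starRingEnd ℂ) (g j)) * ZMod.stdAddChar ((j - k) * ℓ) := by
      refine Finset.sum_congr rfl fun ℓ _ => ?_
      rw [dft_eq, dft_eq, map_mul, map_inv₀, Complex.conj_ofReal, map_sum]
      rw [mul_mul_mul_comm, ← mul_inv, sqrt_sq, Finset.sum_mul_sum]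
      congr 1
      refine Finset.sum_congr rfl fun k _ => Finset.sum_congr rfl fun j _ => ?_
      rw [map_mul, conj_std, neg_neg, mul_mul_mul_comm, ← AddChar.map_add_eq_mul]
      congr 2
      ring
    _ = (p:ℂ)⁻¹ * ∑ k : ZMod p, ∑ j : ZMod p,
          (f k * (starRingEnd ℂ) (g j)) * ∑ ℓ : ZMod p, ZMod.stdAddChar ((j - k) * ℓ) := by
      rw [← Finset.mul_sum]
      congr 1
      rw [Finset.sum_comm]
      refine Finset.sum_congr rfl fun k _ => ?_
      rw [Finset.sum_comm]
      refine Finset.sum_congr rfl fun j _ => ?_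
      rw [Finset.mul_sum]
    _ = ∑ k : ZMod p, f k * (starRingEnd ℂ) (g k) := by
      simp_rw [orth, sub_eq_zero, mul_ite, mul_zero, Finset.sum_ite_eq', Finset.mem_univ, if_true]
      rw [← Finset.sum_mul]
      field_simp

lemma plancherel_real (f : ZMod p → ℂ) :
    ∑ k : ZMod p, ‖f k‖ ^ 2 = ∑ ℓ : ZMod p, ‖dft p f ℓ‖ ^ 2 := by
  have h := plancherel f f
  have h2 : ∀ z : ℂ, z * (starRingEnd ℂ) z = ((‖z‖ ^ 2 : ℝ) : ℂ) := fun z => by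
    rw [Complex.mul_conj, Complex.normSq_eq_norm_sq]
  simp_rw [h2] at h
  rw [← Complex.ofReal_sum, ← Complex.ofReal_sum] at h
  exact_mod_cast h.symm

lemma dft_corr (x z : ZMod p → ℂ) (ℓ : ZMod p) :
    dft p (fun k => ip p x (Tr k z)) ℓ
      = (Real.sqrt p : ℂ) * (dft p x ℓ * (starRingEnd ℂ) (dft p z ℓ)) := by
  have key : ∑ k : ZMod p, ip p x (Tr k z) * ZMod.stdAddChar (-(ℓ * k))
      = (∑ j : ZMod p, x j * ZMod.stdAddChar (-(ℓ * j))) *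
        (∑ u : ZMod p, (starRingEnd ℂ) (z u) * ZMod.stdAddChar (ℓ * u)) := by
    unfold ip Tr
    simp_rw [Finset.sum_mul]
    rw [Finset.sum_comm]
    refine Finset.sum_congr rfl fun j _ => ?_
    rw [Finset.mul_sum]
    refine (Fintype.sum_equiv (Equiv.subLeft j) _ _ fun u => ?_).symm
    simp only [Equiv.subLeft_apply, sub_sub_cancel]
    rw [mul_mul_mul_comm, ← AddChar.map_add_eq_mul]
    have h9 : -(ℓ * j) + ℓ * u = -(ℓ * (j - u)) := by ring
    rw [h9, mul_assoc]
  rw [dft_eq, key, dft_eq, dft_eq]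
  rw [map_mul, map_inv₀, Complex.conj_ofReal, map_sum]
  simp_rw [map_mul, conj_std, neg_neg]
  field_simp [sqrt_ne]

lemma dft_dil (m : (ZMod p)ˣ) (y : ZMod p → ℂ) (ℓ : ZMod p) :
    dft p (Dil (m : ZMod p) y) ℓ = dft p y ((m : ZMod p) * ℓ) := by
  rw [dft_eq, dft_eq]
  congr 1
  refine (Fintype.sum_equiv (Units.mulLeft m) _ _ fun j => ?_).symm
  simp only [Units.mulLeft_apply, Dil]
  rw [← mul_assoc, ZMod.inv_mul_of_unit _ m.isUnit, one_mul]
  congr 2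
  ring

lemma stepA (x z : ZMod p → ℂ) :
    ∑ k : ZMod p, ‖ip p x (Tr k z)‖ ^ 2
      = (p : ℝ) * ∑ ℓ : ZMod p, ‖dft p x ℓ‖ ^ 2 * ‖dft p z ℓ‖ ^ 2 := by
  rw [plancherel_real (fun k => ip p x (Tr k z))]
  rw [Finset.mul_sum]
  refine Finset.sum_congr rfl fun ℓ _ => ?_
  rw [dft_corr, norm_mul, norm_mul, mul_pow, mul_pow, RCLike.norm_conj]
  have : ‖(Real.sqrt p : ℂ)‖ ^ 2 = (p : ℝ) := by
    rw [Complex.norm_real, Real.norm_eq_abs, sq_abs, Real.sq_sqrt (by positivity)]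
  rw [this]

section GroupPart

variable {G : Type*} [CommGroup G] [Fintype G]

lemma mem_M_iff (ε : G) (hε : ∀ u : G, u ∈ Subgroup.zpowers ε) (M : Subgroup G)
    (a : ℕ) (hac : Fintype.card G = Fintype.card M * a) (k : ℤ) :
    ε ^ k ∈ M ↔ (a : ℤ) ∣ k := by
  have hgen : ∀ q : G ⧸ M, q ∈ Subgroup.zpowers ((ε : G) : G ⧸ M) := by
    intro q
    induction q using QuotientGroup.induction_on with
    | H u =>
      obtain ⟨j, hj⟩ := Subgroup.mem_zpowers_iff.mp (hε u)
      exact Subgroup.mem_zpowers_iff.mpr ⟨j, by rw [← QuotientGroup.mk_zpow, hj]⟩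
  have horder : orderOf ((ε : G) : G ⧸ M) = a := by
    rw [orderOf_eq_card_of_forall_mem_zpowers hgen]
    have h1 : Nat.card G = Nat.card (G ⧸ M) * Nat.card M :=
      Subgroup.card_eq_card_quotient_mul_card_subgroup M
    have h2 : (0:ℕ) < Fintype.card M := Fintype.card_pos
    rw [Nat.card_eq_fintype_card, Nat.card_eq_fintype_card (α := M)] at h1
    rw [hac, mul_comm] at h1
    exact (Nat.eq_of_mul_eq_mul_right h2 h1.symm)
  rw [← QuotientGroup.eq_one_iff, QuotientGroup.mk_zpow, ← orderOf_dvd_iff_zpow_eq_one, horder]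

lemma mem_coset_iff (ε : G) (hε : ∀ u : G, u ∈ Subgroup.zpowers ε) (M : Subgroup G)
    (a : ℕ) (hac : Fintype.card G = Fintype.card M * a) (t : ℕ) (k : ℤ) :
    ε ^ k ∈ (ε ^ t) • (M : Set G) ↔ (a : ℤ) ∣ k - t := by
  rw [Set.mem_smul_set_iff_inv_smul_mem]
  have h : (ε ^ t)⁻¹ • ε ^ k = ε ^ (k - (t : ℤ)) := by
    rw [smul_eq_mul, zpow_sub, ← zpow_natCast]
    group
  rw [h, SetLike.mem_coe, mem_M_iff ε hε M a hac]

lemma hinner (ε : G) (M : Subgroup G) (F : G → ℝ) (t : ℕ) (u : G)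
    (hu : u ∈ (ε ^ t) • (M : Set G)) :
    ∑ m : M, F ((m : G) * u)
      = ∑ w ∈ Finset.univ.filter (fun w : G => w ∈ ε ^ t • (M : Set G)), F w := by
  obtain ⟨s₀, hs₀, rfl⟩ := hu
  refine Finset.sum_bij (fun (m : M) _ => (m : G) * (ε ^ t • s₀)) ?_ ?_ ?_ ?_
  · intro m _
    simp only [Finset.mem_filter, Finset.mem_univ, true_and]
    have : (m : G) * (ε ^ t • s₀) = ε ^ t • ((m : G) * s₀) := by
      simp only [smul_eq_mul, mul_left_comm]
    rw [this]
    exact Set.smul_mem_smul_set (mul_mem m.2 hs₀)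
  · intro m₁ _ m₂ _ h
    exact Subtype.ext (mul_right_cancel h)
  · intro w hw
    simp only [Finset.mem_filter, Finset.mem_univ, true_and] at hw
    obtain ⟨s₁, hs₁, rfl⟩ := hw
    refine ⟨⟨s₁ * s₀⁻¹, mul_mem hs₁ (inv_mem hs₀)⟩, Finset.mem_univ _, ?_⟩
    simp only [smul_eq_mul]
    have h3 : s₀⁻¹ * (ε ^ t * s₀) = ε ^ t := by
      rw [mul_comm (ε ^ t) s₀, ← mul_assoc, inv_mul_cancel, one_mul]
    rw [mul_assoc, h3, mul_comm]
  · intro m _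
    rfl

lemma stepC0 (ε : G) (hε : ∀ u : G, u ∈ Subgroup.zpowers ε) (M : Subgroup G)
    (a : ℕ) (ha_pos : 0 < a) (hac : Fintype.card G = Fintype.card M * a) (f g : G → ℝ) :
    ∑ m : M, ∑ u : G, f u * g ((m : G) * u)
      = ∑ t ∈ Finset.range a,
          (∑ ℓ ∈ Finset.univ.filter (fun ℓ : G => ℓ ∈ ε ^ t • (M : Set G)), f ℓ) *
          (∑ w ∈ Finset.univ.filter (fun w : G => w ∈ ε ^ t • (M : Set G)), g w) := by
  have haZ : (a : ℤ) ≠ 0 := by exact_mod_cast ha_pos.ne'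
  have hexp : ∀ u : G, ∃ k : ℤ, ε ^ k = u := fun u => Subgroup.mem_zpowers_iff.mp (hε u)
  set κ : G → ℤ := fun u => Classical.choose (hexp u) with hκ
  have hκ_spec : ∀ u, ε ^ (κ u) = u := fun u => Classical.choose_spec (hexp u)
  set φ : G → ℕ := fun u => (κ u % a).toNat with hφ
  have hmod : ∀ u, 0 ≤ κ u % a ∧ κ u % a < a := fun u =>
    ⟨Int.emod_nonneg _ haZ, Int.emod_lt_of_pos _ (by exact_mod_cast ha_pos)⟩
  have hφ_lt : ∀ u, φ u < a := by
    intro u; have := hmod u; simp only [hφ]; omega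
  have hφ_mem : ∀ (u : G) (t : ℕ), t < a → (u ∈ ε ^ t • (M : Set G) ↔ φ u = t) := by
    intro u t hlt
    have hdvd := mem_coset_iff ε hε M a hac t (κ u)
    rw [hκ_spec u] at hdvd
    rw [hdvd]
    have ht : (t : ℤ) % a = t := Int.emod_eq_of_lt (by positivity) (by exact_mod_cast hlt)
    have key : ((a:ℤ) ∣ κ u - t) ↔ κ u % a = t := by
      constructor
      · intro h
        have h2 := Int.modEq_iff_dvd.mpr h
        unfold Int.ModEq at h2
        rw [ht] at h2
        exact h2.symm
      · intro h
        refine Int.ModEq.dvd ?_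
        show (t : ℤ) % a = κ u % a
        rw [ht, h]
    rw [key]
    have := hmod u
    simp only [hφ]
    omega
  have hpart : ∀ F : G → ℝ, ∑ u : G, F u
      = ∑ t ∈ Finset.range a,
          ∑ u ∈ Finset.univ.filter (fun u : G => u ∈ ε ^ t • (M : Set G)), F u := by
    intro F
    rw [← Finset.sum_fiberwise_of_maps_to (g := φ)
      (fun u _ => Finset.mem_range.mpr (hφ_lt u)) F]
    refine Finset.sum_congr rfl fun t ht => ?_
    refine Finset.sum_congr ?_ fun _ _ => rfl
    ext u
    simp only [Finset.mem_filter, Finset.mem_univ, true_and]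
    exact (hφ_mem u t (Finset.mem_range.mp ht)).symm
  rw [Finset.sum_comm, hpart (fun u => ∑ m : M, f u * g ((m : G) * u))]
  refine Finset.sum_congr rfl fun t _ => ?_
  rw [Finset.sum_mul]
  refine Finset.sum_congr rfl fun u hu => ?_
  simp only [Finset.mem_filter, Finset.mem_univ, true_and] at hu
  rw [← Finset.mul_sum, ← hinner ε M g t u hu]

lemma stepC (ε : G) (hε : ∀ u : G, u ∈ Subgroup.zpowers ε) (M : Subgroup G)
    (a : ℕ) (ha_pos : 0 < a) (hac : Fintype.card G = Fintype.card M * a)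
    (C : ℕ → Set G) (hC : ∀ (t : ℕ) (u : G), u ∈ C t ↔ ∃ s, s ∈ M ∧ ε ^ t * s = u)
    (f g : G → ℝ) :
    ∑ m : M, ∑ u : G, f u * g ((m : G) * u)
      = ∑ t ∈ Finset.range a,
          (∑ ℓ ∈ Finset.univ.filter (fun ℓ : G => ℓ ∈ C t), f ℓ) *
          (∑ w ∈ Finset.univ.filter (fun w : G => w ∈ C t), g w) := by
  have hCfilter : ∀ t : ℕ, Finset.univ.filter (fun u : G => u ∈ C t)
      = Finset.univ.filter (fun u : G => u ∈ (ε ^ t) • (M : Set G)) := by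
    intro t
    ext u
    simp only [Finset.mem_filter, Finset.mem_univ, true_and, hC, Set.mem_smul_set,
      smul_eq_mul, SetLike.mem_coe]
  rw [stepC0 ε hε M a ha_pos hac f g]
  refine Finset.sum_congr rfl fun t _ => ?_
  rw [hCfilter t]

end GroupPart

lemma sum_zmod_split [Fact p.Prime] (F : ZMod p → ℝ) :
    ∑ ℓ : ZMod p, F ℓ = F 0 + ∑ u : (ZMod p)ˣ, F ↑u := by
  have h1 : ∑ u : (ZMod p)ˣ, F ↑u = ∑ ℓ ∈ Finset.univ.erase (0 : ZMod p), F ℓ := by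
    refine Finset.sum_bij (fun (u : (ZMod p)ˣ) _ => (u : ZMod p)) ?_ ?_ ?_ ?_
    · intro u _
      exact Finset.mem_erase.mpr ⟨u.ne_zero, Finset.mem_univ _⟩
    · intro u₁ _ u₂ _ h
      exact Units.ext h
    · intro ℓ hℓ
      have hne : ℓ ≠ 0 := (Finset.mem_erase.mp hℓ).1
      obtain ⟨u, hu⟩ := IsUnit.exists_left_inv (isUnit_iff_ne_zero.mpr hne).unit.isUnit
      exact ⟨(isUnit_iff_ne_zero.mpr hne).unit, Finset.mem_univ _, rfl⟩
    · intro u _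
      rfl
  rw [h1, add_comm]
  exact (Finset.sum_erase_add _ _ (Finset.mem_univ 0)).symm

end WAux

theorem wavelet_norm_coset_formula {p : ℕ} [Fact p.Prime]
    (ε : (ZMod p)ˣ) (hε : ∀ u : (ZMod p)ˣ, u ∈ Subgroup.zpowers ε)
    (M : Subgroup (ZMod p)ˣ) (hMd : Fintype.card M ∣ p - 1)
    (a : ℕ) (ha : a = (p - 1) / Fintype.card M)
    (x y : ZMod p → ℂ) :
    ∑ m : M, ∑ k : ZMod p, ‖ip p x (Tr k (Dil ((m : (ZMod p)ˣ) : ZMod p) y))‖ ^ 2 =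
      p * ((Fintype.card M : ℝ) * ‖dft p x 0‖ ^ 2 * ‖dft p y 0‖ ^ 2 +
        ∑ t ∈ Finset.range a,
          (∑ ℓ ∈ Finset.univ.filter (fun ℓ : (ZMod p)ˣ => ℓ ∈ ε ^ t • (M : Set (ZMod p)ˣ)),
              ‖dft p x ((ℓ : (ZMod p)ˣ) : ZMod p)‖ ^ 2) *
          (∑ w ∈ Finset.univ.filter (fun w : (ZMod p)ˣ => w ∈ ε ^ t • (M : Set (ZMod p)ˣ)),
              ‖dft p y ((w : (ZMod p)ˣ) : ZMod p)‖ ^ 2)) := by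
  have hp2 : 2 ≤ p := (Fact.out : p.Prime).two_le
  have hcardU : Fintype.card (ZMod p)ˣ = p - 1 := by
    rw [ZMod.card_units_eq_totient, Nat.totient_prime Fact.out]
  have hac : Fintype.card (ZMod p)ˣ = Fintype.card M * a := by
    rw [hcardU, ha, Nat.mul_div_cancel' hMd]
  have ha_pos : 0 < a := by
    refine Nat.pos_of_ne_zero fun h0 => ?_
    rw [h0, mul_zero] at hac
    exact Fintype.card_pos.ne' hac
  set f : (ZMod p)ˣ → ℝ := fun u => ‖dft p x (u : ZMod p)‖ ^ 2 with hf
  set g : (ZMod p)ˣ → ℝ := fun u => ‖dft p y (u : ZMod p)‖ ^ 2 with hg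
  calc
    ∑ m : M, ∑ k : ZMod p, ‖ip p x (Tr k (Dil ((m : (ZMod p)ˣ) : ZMod p) y))‖ ^ 2
        = ∑ m : M, (p : ℝ) * ∑ ℓ : ZMod p,
            ‖dft p x ℓ‖ ^ 2 * ‖dft p y (((m : (ZMod p)ˣ) : ZMod p) * ℓ)‖ ^ 2 := by
      refine Finset.sum_congr rfl fun m _ => ?_
      rw [WAux.stepA]
      congr 1
      refine Finset.sum_congr rfl fun ℓ _ => ?_
      rw [WAux.dft_dil]
    _ = (p : ℝ) * ∑ m : M, (‖dft p x 0‖ ^ 2 * ‖dft p y 0‖ ^ 2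
          + ∑ u : (ZMod p)ˣ, f u * g ((m : (ZMod p)ˣ) * u)) := by
      rw [Finset.mul_sum]
      refine Finset.sum_congr rfl fun m _ => ?_
      congr 1
      rw [WAux.sum_zmod_split]
      simp only [mul_zero, hf, hg, Units.val_mul]
    _ = (p : ℝ) * ((Fintype.card M : ℝ) * (‖dft p x 0‖ ^ 2 * ‖dft p y 0‖ ^ 2)
          + ∑ m : M, ∑ u : (ZMod p)ˣ, f u * g ((m : (ZMod p)ˣ) * u)) := by
      rw [Finset.sum_add_distrib, Finset.sum_const, Finset.card_univ, nsmul_eq_mul]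
    _ = p * ((Fintype.card M : ℝ) * ‖dft p x 0‖ ^ 2 * ‖dft p y 0‖ ^ 2 +
        ∑ t ∈ Finset.range a,
          (∑ ℓ ∈ Finset.univ.filter (fun ℓ : (ZMod p)ˣ => ℓ ∈ ε ^ t • (M : Set (ZMod p)ˣ)),
              ‖dft p x ((ℓ : (ZMod p)ˣ) : ZMod p)‖ ^ 2) *
          (∑ w ∈ Finset.univ.filter (fun w : (ZMod p)ˣ => w ∈ ε ^ t • (M : Set (ZMod p)ˣ)),
              ‖dft p y ((w : (ZMod p)ˣ) : ZMod p)‖ ^ 2)) := by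
      rw [mul_add, mul_add]
      congr 1
      · ring
      · have hC : ∀ (t : ℕ) (u : (ZMod p)ˣ),
            u ∈ ε ^ t • (M : Set (ZMod p)ˣ) ↔ ∃ s, s ∈ M ∧ ε ^ t * s = u := by
          intro t u
          rw [Set.mem_smul_set]
          constructor
          · rintro ⟨s, hs, rfl⟩
            exact ⟨s, hs, Units.ext rfl⟩
          · rintro ⟨s, hs, rfl⟩
            exact ⟨s, hs, Units.ext rfl⟩
        exact congrArg (HMul.hMul (p:ℝ))
          (WAux.stepC ε hε M a ha_pos hac (fun t => ε ^ t • (M : Set (ZMod p)ˣ)) hC f g)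
end
end

section
/- Let p be prime, ε a generator of U_p, M ≤ U_p a subgroup of order M, a = (p-1)/M, and y ∈ C^p nonzero. The wavelet system { T_k D_m y : m ∈ M, k ∈ Z_p } is a frame for C^p (i.e., spans C^p) if and only if ŷ(0) ≠ 0 and for each t ∈ {0,...,a-1} there exists m_t ∈ M with ŷ(ε^t m_t) ≠ 0. -/
open scoped BigOperators Classical Pointwise
open Finset

noncomputable section

section Aux

variable {p : ℕ} [NeZero p]

lemma dft_eq_mdft (x : ZMod p → ℂ) (ℓ : ZMod p) :
    dft p x ℓ = (Real.sqrt p : ℂ)⁻¹ * ZMod.dft x ℓ := by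
  rw [dft, ZMod.dft_apply]
  congr 1
  refine Finset.sum_congr rfl fun k _ => ?_
  have h1 : ((-(k.val * ℓ.val : ℤ) : ℤ) : ZMod p) = -(k * ℓ) := by
    push_cast
    simp [ZMod.natCast_val, ZMod.cast_id]
  rw [smul_eq_mul, ← h1, ZMod.stdAddChar_coe, mul_comm]
  congr 1
  push_cast
  ring

lemma mdft_Tr (k : ZMod p) (z : ZMod p → ℂ) (ℓ : ZMod p) :
    ZMod.dft (Tr k z) ℓ = ZMod.stdAddChar (-(k * ℓ)) * ZMod.dft z ℓ := by
  rw [ZMod.dft_apply, ZMod.dft_apply,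
    ← Equiv.sum_comp (Equiv.addRight k) (fun j => ZMod.stdAddChar (-(j * ℓ)) • Tr k z j),
    Finset.mul_sum]
  refine Finset.sum_congr rfl fun i _ => ?_
  have h1 : Tr k z (Equiv.addRight k i) = z i := by simp [Tr]
  have h2 : ((Equiv.addRight k i : ZMod p)) = i + k := rfl
  rw [h1, h2, smul_eq_mul, smul_eq_mul, ← mul_assoc, ← AddChar.map_add_eq_mul]
  ring_nf

lemma mdft_Dil [Fact p.Prime] (u : (ZMod p)ˣ) (z : ZMod p → ℂ) (ℓ : ZMod p) :
    ZMod.dft (Dil (u : ZMod p) z) ℓ = ZMod.dft z ((u : ZMod p) * ℓ) := by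
  rw [ZMod.dft_apply, ZMod.dft_apply,
    ← Equiv.sum_comp (Equiv.mulLeft₀ (u : ZMod p) u.ne_zero)
      (fun j => ZMod.stdAddChar (-(j * ℓ)) • Dil (u : ZMod p) z j)]
  refine Finset.sum_congr rfl fun i _ => ?_
  have h2 : ((Equiv.mulLeft₀ (u : ZMod p) u.ne_zero i : ZMod p)) = (u : ZMod p) * i := rfl
  have h1 : Dil (u : ZMod p) z ((u : ZMod p) * i) = z i := by
    show z ((u : ZMod p)⁻¹ * ((u : ZMod p) * i)) = z i
    rw [inv_mul_cancel_left₀ u.ne_zero]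
  rw [h2, h1]
  ring_nf

end Aux

section Aux2

variable {p : ℕ} [Fact p.Prime]

lemma span_modulates (M : Subgroup (ZMod p)ˣ) (Y : ZMod p → ℂ) :
    Submodule.span ℂ
        {g : ZMod p → ℂ | ∃ m : (ZMod p)ˣ, m ∈ M ∧ ∃ k : ZMod p,
          g = fun ℓ => ZMod.stdAddChar (-(k * ℓ)) * Y ((m : ZMod p) * ℓ)} = ⊤ ↔
      ∀ ℓ : ZMod p, ∃ m : (ZMod p)ˣ, m ∈ M ∧ Y ((m : ZMod p) * ℓ) ≠ 0 := by
  set S := {g : ZMod p → ℂ | ∃ m : (ZMod p)ˣ, m ∈ M ∧ ∃ k : ZMod p,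
      g = fun ℓ => ZMod.stdAddChar (-(k * ℓ)) * Y ((m : ZMod p) * ℓ)} with hS
  constructor
  · intro htop ℓ0
    by_contra hcon
    push_neg at hcon
    have hker : S ⊆ LinearMap.ker (LinearMap.proj (R := ℂ) (φ := fun _ : ZMod p => ℂ) ℓ0) := by
      rintro g ⟨m, hm, k, rfl⟩
      simp only [SetLike.mem_coe, LinearMap.mem_ker, LinearMap.proj_apply]
      rw [hcon m hm, mul_zero]
    have hle : Submodule.span ℂ S ≤ LinearMap.ker (LinearMap.proj (R := ℂ)
        (φ := fun _ : ZMod p => ℂ) ℓ0) := Submodule.span_le.mpr hker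
    rw [htop] at hle
    have : (fun _ : ZMod p => (1:ℂ)) ∈ LinearMap.ker (LinearMap.proj (R := ℂ)
        (φ := fun _ : ZMod p => ℂ) ℓ0) := hle trivial
    simp [LinearMap.mem_ker] at this
  · intro hY
    have hsingle : ∀ j : ZMod p, Pi.single j (1:ℂ) ∈ Submodule.span ℂ S := by
      intro j
      obtain ⟨m, hm, hYm⟩ := hY j
      set c : ZMod p → ℂ :=
        (ZMod.dft (N := p)).symm (Pi.single j ((Y ((m : ZMod p) * j))⁻¹)) with hc
      have hdftc : ZMod.dft c = Pi.single j ((Y ((m : ZMod p) * j))⁻¹) := by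
        rw [hc, LinearEquiv.apply_symm_apply]
      have hrep : Pi.single j (1:ℂ) =
          ∑ k : ZMod p, c k • (fun ℓ => ZMod.stdAddChar (-(k * ℓ)) * Y ((m : ZMod p) * ℓ)) := by
        funext ℓ
        have h1 : (∑ k : ZMod p, c k •
            (fun ℓ => ZMod.stdAddChar (-(k * ℓ)) * Y ((m : ZMod p) * ℓ))) ℓ
            = (∑ k : ZMod p, ZMod.stdAddChar (-(k * ℓ)) • c k) * Y ((m : ZMod p) * ℓ) := by
          rw [Finset.sum_apply, Finset.sum_mul]
          refine Finset.sum_congr rfl fun k _ => ?_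
          simp only [Pi.smul_apply, smul_eq_mul]
          ring
        rw [h1, ← ZMod.dft_apply, hdftc]
        by_cases hj : ℓ = j
        · subst hj
          simp [inv_mul_cancel₀ hYm]
        · simp [Pi.single_apply, hj]
      rw [hrep]
      refine Submodule.sum_mem _ fun k _ => Submodule.smul_mem _ _ ?_
      exact Submodule.subset_span ⟨m, hm, k, rfl⟩
    rw [eq_top_iff]
    intro x _
    have hx : x = ∑ j : ZMod p, x j • (Pi.single j (1:ℂ) : ZMod p → ℂ) := by
      funext ℓ
      rw [Finset.sum_apply]
      simp [Pi.single_apply, mul_comm]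
    rw [hx]
    exact Submodule.sum_mem _ fun j _ => Submodule.smul_mem _ _ (hsingle j)

lemma pow_a_mem (ε : (ZMod p)ˣ) (hε : ∀ u : (ZMod p)ˣ, u ∈ Subgroup.zpowers ε)
    (M : Subgroup (ZMod p)ˣ) (a : ℕ) (ha : a = (p - 1) / Fintype.card M) :
    0 < a ∧ ε ^ a ∈ M := by
  have hp2 : 2 ≤ p := (Fact.out : p.Prime).two_le
  have horder : orderOf ε = p - 1 := by
    rw [orderOf_eq_card_of_forall_mem_zpowers hε, Nat.card_eq_fintype_card, ZMod.card_units p]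
  set d := Fintype.card M with hdd
  have hdvd : d ∣ p - 1 := by
    have := Subgroup.card_subgroup_dvd_card M
    rwa [Nat.card_eq_fintype_card, Nat.card_eq_fintype_card, ZMod.card_units p, ← hdd] at this
  have hdpos : 0 < d := Fintype.card_pos
  have had : a * d = p - 1 := by rw [ha]; exact Nat.div_mul_cancel hdvd
  have hppos : 0 < p - 1 := by omega
  have hapos : 0 < a := by
    rcases Nat.eq_zero_or_pos a with h | h
    · rw [h, zero_mul] at had; omega
    · exact h
  refine ⟨hapos, ?_⟩
  have hle : M ≤ Subgroup.zpowers (ε ^ a) := by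
    intro m hm
    obtain ⟨n, rfl⟩ := mem_powers_iff_mem_zpowers.mpr (hε m)
    have hmd : (ε ^ n) ^ d = 1 := by
      have h1 : (⟨ε ^ n, hm⟩ : M) ^ d = 1 := by
        rw [hdd, ← Nat.card_eq_fintype_card]
        exact pow_card_eq_one'
      have h2 := congrArg (Subgroup.subtype M) h1
      simpa using h2
    have hdvdn : (p - 1) ∣ n * d := by
      rw [← horder]
      exact orderOf_dvd_of_pow_eq_one (by rw [pow_mul]; exact hmd)
    have han : a ∣ n := by
      rw [← had] at hdvdn
      exact (Nat.mul_dvd_mul_iff_right hdpos).mp hdvdn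
    obtain ⟨q, rfl⟩ := han
    show ε ^ (a * q) ∈ Subgroup.zpowers (ε ^ a)
    rw [pow_mul]
    exact Subgroup.pow_mem _ (Subgroup.mem_zpowers _) q
  have hadvd : a ∣ p - 1 := ⟨d, had.symm⟩
  have hcard : Nat.card (Subgroup.zpowers (ε ^ a)) = d := by
    rw [Nat.card_zpowers, orderOf_pow, horder, Nat.gcd_eq_right hadvd, ← had,
      Nat.mul_div_cancel_left _ hapos]
  have : M = Subgroup.zpowers (ε ^ a) := by
    refine Subgroup.eq_of_le_of_card_ge hle ?_
    rw [hcard, Nat.card_eq_fintype_card]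
  rw [this]
  exact Subgroup.mem_zpowers _

lemma cover_lemma (ε : (ZMod p)ˣ) (hε : ∀ u : (ZMod p)ˣ, u ∈ Subgroup.zpowers ε)
    (M : Subgroup (ZMod p)ˣ) (a : ℕ) (hapos : 0 < a) (hA : ε ^ a ∈ M) (Y : ZMod p → ℂ) :
    (∀ ℓ : ZMod p, ∃ m : (ZMod p)ˣ, m ∈ M ∧ Y ((m : ZMod p) * ℓ) ≠ 0) ↔
      (Y 0 ≠ 0 ∧ ∀ t : ℕ, t < a → ∃ m : (ZMod p)ˣ, m ∈ M ∧
        Y ((ε ^ t * m : (ZMod p)ˣ) : ZMod p) ≠ 0) := by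
  constructor
  · intro h
    refine ⟨?_, ?_⟩
    · obtain ⟨m, hm, h0⟩ := h 0
      rwa [mul_zero] at h0
    · intro t _
      obtain ⟨m, hm, hne⟩ := h ((ε ^ t : (ZMod p)ˣ) : ZMod p)
      refine ⟨m, hm, ?_⟩
      rwa [Units.val_mul, mul_comm]
  · rintro ⟨h0, ht⟩ ℓ
    by_cases hℓ : ℓ = 0
    · exact ⟨1, one_mem M, by simpa [hℓ] using h0⟩
    · lift ℓ to (ZMod p)ˣ using Ne.isUnit hℓ with u hu
      obtain ⟨n, hn⟩ := mem_powers_iff_mem_zpowers.mpr (hε u)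
      obtain ⟨m, hm, hne⟩ := ht (n % a) (Nat.mod_lt n hapos)
      refine ⟨m * ((ε ^ a) ^ (n / a))⁻¹, mul_mem hm (inv_mem (pow_mem hA _)), ?_⟩
      have key : (m * ((ε ^ a) ^ (n / a))⁻¹) * u = ε ^ (n % a) * m := by
        have hu2 : u = (ε ^ a) ^ (n / a) * ε ^ (n % a) := by
          rw [← pow_mul, ← pow_add, Nat.div_add_mod]
          exact hn.symm
        rw [hu2, mul_assoc, inv_mul_cancel_left]
        exact mul_comm m _
      rw [← Units.val_mul, key]
      exact hne

lemma span_image_top_iff {V W : Type*} [AddCommGroup V] [Module ℂ V] [AddCommGroup W]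
    [Module ℂ W] (e : V ≃ₗ[ℂ] W) (S : Set V) :
    Submodule.span ℂ (⇑e '' S) = ⊤ ↔ Submodule.span ℂ S = ⊤ := by
  rw [show ⇑e = ⇑e.toLinearMap from rfl, Submodule.span_image]
  have hinj := Submodule.map_injective_of_injective (f := e.toLinearMap) e.injective
  have htop : Submodule.map e.toLinearMap ⊤ = ⊤ := by
    rw [Submodule.map_top, LinearMap.range_eq_top]
    exact e.surjective
  constructor
  · intro h
    apply hinj
    rw [h, htop]
  · intro h
    rw [h, htop]

end Aux2

theorem wavelet_frame_characterization {p : ℕ} [Fact p.Prime]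
    (ε : (ZMod p)ˣ) (hε : ∀ u : (ZMod p)ˣ, u ∈ Subgroup.zpowers ε)
    (M : Subgroup (ZMod p)ˣ)
    (a : ℕ) (ha : a = (p - 1) / Fintype.card M)
    (y : ZMod p → ℂ) (hy : y ≠ 0) :
    Submodule.span ℂ
        {f : ZMod p → ℂ | ∃ m : (ZMod p)ˣ, m ∈ M ∧ ∃ k : ZMod p,
          f = Tr k (Dil ((m : (ZMod p)ˣ) : ZMod p) y)} = ⊤ ↔
      (dft p y 0 ≠ 0 ∧
        ∀ t : ℕ, t < a → ∃ m : (ZMod p)ˣ, m ∈ M ∧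
          dft p y ((ε ^ t * m : (ZMod p)ˣ) : ZMod p) ≠ 0) := by
  obtain ⟨hapos, hA⟩ := pow_a_mem ε hε M a ha
  set S : Set (ZMod p → ℂ) := {f : ZMod p → ℂ | ∃ m : (ZMod p)ˣ, m ∈ M ∧ ∃ k : ZMod p,
      f = Tr k (Dil ((m : (ZMod p)ˣ) : ZMod p) y)} with hSdef
  have himg : ⇑(ZMod.dft (N := p)) '' S =
      {g : ZMod p → ℂ | ∃ m : (ZMod p)ˣ, m ∈ M ∧ ∃ k : ZMod p,
        g = fun ℓ => ZMod.stdAddChar (-(k * ℓ)) * ZMod.dft y ((m : ZMod p) * ℓ)} := by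
    ext g
    constructor
    · rintro ⟨f, ⟨m, hm, k, rfl⟩, rfl⟩
      exact ⟨m, hm, k, by funext ℓ; rw [mdft_Tr, mdft_Dil]⟩
    · rintro ⟨m, hm, k, rfl⟩
      exact ⟨Tr k (Dil ((m : (ZMod p)ˣ) : ZMod p) y), ⟨m, hm, k, rfl⟩,
        by funext ℓ; rw [mdft_Tr, mdft_Dil]⟩
  have hc : (Real.sqrt p : ℂ)⁻¹ ≠ 0 := by
    have hp : (0:ℝ) < p := by
      have : 2 ≤ p := (Fact.out : p.Prime).two_le
      positivity
    have : (0:ℝ) < Real.sqrt p := Real.sqrt_pos.mpr hp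
    simp [Complex.ofReal_ne_zero, ne_of_gt this]
  have hne : ∀ v : ZMod p, (dft p y v ≠ 0) ↔ (ZMod.dft y v ≠ 0) := by
    intro v
    rw [dft_eq_mdft, mul_ne_zero_iff, and_iff_right hc]
  rw [← span_image_top_iff (ZMod.dft (N := p)) S, himg, span_modulates M (ZMod.dft y),
    cover_lemma ε hε M a hapos hA]
  simp_rw [hne]
end
end

section
/- Let p be prime, ε a generator of U_p, M ≤ U_p of order M, a = (p-1)/M, and y ∈ C^p nonzero. If a > ‖ŷ‖₀ - 1, where ‖ŷ‖₀ is the number of nonzero entries of ŷ, then the wavelet system { T_k D_m y : m ∈ M, k ∈ Z_p } is not a frame for C^p. -/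
open scoped BigOperators Classical Pointwise
open Finset

noncomputable section

def psi (p : ℕ) [NeZero p] (z : ZMod p) : ℂ :=
  Complex.exp (-(2 * Real.pi * Complex.I * z.val) / p)

lemma psi_ne_zero (p : ℕ) [NeZero p] (z : ZMod p) : psi p z ≠ 0 :=
  Complex.exp_ne_zero _

lemma psi_nat (p : ℕ) [NeZero p] (n : ℕ) :
    Complex.exp (-(2 * Real.pi * Complex.I * n) / p) = psi p (n : ZMod p) := by
  have hp : (p : ℂ) ≠ 0 := Nat.cast_ne_zero.mpr (NeZero.ne p)
  rw [psi, ZMod.val_natCast]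
  conv_lhs => rw [← Nat.div_add_mod n p]
  have hrw : (-(2 * Real.pi * Complex.I * ((p * (n / p) + n % p : ℕ) : ℂ)) / p)
      = (-((n / p : ℕ) : ℂ)) * (2 * Real.pi * Complex.I)
        + (-(2 * Real.pi * Complex.I * ((n % p : ℕ) : ℂ)) / p) := by
    push_cast
    field_simp
    ring
  rw [hrw, Complex.exp_add]
  have h1 : Complex.exp ((-((n / p : ℕ) : ℂ)) * (2 * Real.pi * Complex.I)) = 1 := by
    have := Complex.exp_int_mul_two_pi_mul_I (-(n / p : ℕ) : ℤ)
    push_cast at this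
    exact this
  rw [h1, one_mul]

lemma psi_zero (p : ℕ) [NeZero p] : psi p 0 = 1 := by
  simp [psi]

lemma psi_add (p : ℕ) [NeZero p] (z w : ZMod p) :
    psi p (z + w) = psi p z * psi p w := by
  have h1 : ((z.val + w.val : ℕ) : ZMod p) = z + w := by
    push_cast [ZMod.natCast_val, ZMod.cast_id]
    rfl
  have := psi_nat p (z.val + w.val)
  rw [h1] at this
  rw [← this, psi, psi, ← Complex.exp_add]
  congr 1
  push_cast
  ring

lemma dft_eq (p : ℕ) [NeZero p] (x : ZMod p → ℂ) (ℓ : ZMod p) :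
    dft p x ℓ = (Real.sqrt p : ℂ)⁻¹ * ∑ k : ZMod p, x k * psi p (ℓ * k) := by
  rw [dft]
  congr 1
  apply Finset.sum_congr rfl
  intro k _
  congr 1
  have h1 : ((ℓ.val * k.val : ℕ) : ZMod p) = ℓ * k := by
    push_cast [ZMod.natCast_val, ZMod.cast_id]
    rfl
  have := psi_nat p (ℓ.val * k.val)
  rw [h1] at this
  rw [← this]
  push_cast
  ring_nf

lemma dft_Tr (p : ℕ) [NeZero p] (k0 ℓ : ZMod p) (x : ZMod p → ℂ) :
    dft p (Tr k0 x) ℓ = psi p (ℓ * k0) * dft p x ℓ := by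
  rw [dft_eq, dft_eq]
  have h : ∑ k : ZMod p, Tr k0 x k * psi p (ℓ * k)
      = ∑ j : ZMod p, x j * (psi p (ℓ * j) * psi p (ℓ * k0)) := by
    rw [← Equiv.sum_comp (Equiv.addRight k0) (fun k => Tr k0 x k * psi p (ℓ * k))]
    apply Finset.sum_congr rfl
    intro j _
    simp only [Equiv.coe_addRight, Tr, add_sub_cancel_right]
    rw [mul_add, psi_add]
  rw [h]
  simp only [← mul_assoc]
  rw [Finset.mul_sum, Finset.mul_sum]
  apply Finset.sum_congr rfl
  intro j _
  ring

lemma dft_Dil (p : ℕ) [NeZero p] [Fact p.Prime] (m : (ZMod p)ˣ) (ℓ : ZMod p) (x : ZMod p → ℂ) :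
    dft p (Dil ((m : ZMod p)) x) ℓ = dft p x ((m : ZMod p) * ℓ) := by
  have hm : (m : ZMod p) ≠ 0 := Units.ne_zero m
  rw [dft_eq, dft_eq]
  congr 1
  rw [← Equiv.sum_comp (Equiv.mulLeft₀ (m : ZMod p) hm)
    (fun k => Dil ((m : ZMod p)) x k * psi p (ℓ * k))]
  apply Finset.sum_congr rfl
  intro j _
  simp only [Equiv.mulLeft₀_apply, Dil]
  rw [inv_mul_cancel_left₀ hm]
  congr 2
  ring

theorem not_frame_of_large_index {p : ℕ} [Fact p.Prime]
    (ε : (ZMod p)ˣ) (hε : ∀ u : (ZMod p)ˣ, u ∈ Subgroup.zpowers ε)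
    (M : Subgroup (ZMod p)ˣ)
    (a : ℕ) (ha : a = (p - 1) / Fintype.card M)
    (y : ZMod p → ℂ) (hy : y ≠ 0)
    (hbig : (Finset.univ.filter (fun k : ZMod p => dft p y k ≠ 0)).card - 1 < a) :
    ¬ (Submodule.span ℂ
        {f : ZMod p → ℂ | ∃ m : (ZMod p)ˣ, m ∈ M ∧ ∃ k : ZMod p,
          f = Tr k (Dil ((m : (ZMod p)ˣ) : ZMod p) y)} = ⊤) := by
  -- step 1: find ℓ with dft y ((m:ZMod p) * ℓ) = 0 for all m ∈ M
  have key : ∃ ℓ : ZMod p, ∀ m : (ZMod p)ˣ, m ∈ M → dft p y ((m : ZMod p) * ℓ) = 0 := by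
    by_cases h0 : dft p y 0 = 0
    · exact ⟨0, fun m _ => by simpa using h0⟩
    · -- quotient counting
      set S := Finset.univ.filter (fun k : ZMod p => dft p y k ≠ 0) with hS
      have h0S : (0 : ZMod p) ∈ S := by simp [hS, h0]
      set Q := (ZMod p)ˣ ⧸ M
      have hcardU : Nat.card (ZMod p)ˣ = p - 1 := by
        rw [Nat.card_eq_fintype_card, ZMod.card_units_eq_totient,
          Nat.totient_prime (Fact.out : p.Prime)]
      have hG : Nat.card (ZMod p)ˣ = Nat.card Q * Nat.card M :=
        Subgroup.card_eq_card_quotient_mul_card_subgroup M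
      have hMpos : 0 < Nat.card M := Nat.card_pos
      have hQa : Nat.card Q = a := by
        rw [ha, ← hcardU, hG, ← Nat.card_eq_fintype_card,
          Nat.mul_div_cancel _ hMpos]
      -- map nonzero frequencies to cosets
      have : ∃ C : Q, C ∉ (S.erase 0).image
          (fun z => QuotientGroup.mk (α := (ZMod p)ˣ) (s := M)
            (if h : z = (0 : ZMod p) then 1 else Units.mk0 z h)) := by
        by_contra hc
        push_neg at hc
        have hsub : (Finset.univ : Finset Q) ⊆ (S.erase 0).image _ :=
          fun C _ => hc C
        have hle : Fintype.card Q ≤ (S.erase 0).card :=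
          le_trans (Finset.card_le_card hsub) (Finset.card_image_le)
        rw [Finset.card_erase_of_mem h0S] at hle
        have : Fintype.card Q = a := by rw [← Nat.card_eq_fintype_card, hQa]
        omega
      obtain ⟨C, hC⟩ := this
      obtain ⟨u, rfl⟩ := QuotientGroup.mk_surjective C
      refine ⟨(u : ZMod p), fun m hm => ?_⟩
      by_contra hne
      have hmem : (m : ZMod p) * (u : ZMod p) ∈ S.erase 0 := by
        refine Finset.mem_erase.mpr ⟨?_, ?_⟩
        · have : ((m * u : (ZMod p)ˣ) : ZMod p) ≠ 0 := Units.ne_zero _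
          simpa using this
        · simp [hS, hne]
      apply hC
      refine Finset.mem_image.mpr ⟨(m : ZMod p) * (u : ZMod p), hmem, ?_⟩
      have hz : ((m : ZMod p) * (u : ZMod p)) ≠ 0 := by
        have : ((m * u : (ZMod p)ˣ) : ZMod p) ≠ 0 := Units.ne_zero _
        simpa using this
      rw [dif_neg hz]
      have hu : Units.mk0 ((m : ZMod p) * (u : ZMod p)) hz = m * u := by
        ext; simp
      rw [hu]
      rw [QuotientGroup.eq]
      have : (m * u)⁻¹ * u = m⁻¹ := by
        rw [mul_inv_rev]
        rw [mul_comm]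
        group
      rw [this]
      exact M.inv_mem hm
  obtain ⟨ℓ, hℓ⟩ := key
  -- step 2: the linear functional x ↦ ∑ k, x k * psi p (ℓ * k)
  set φ : (ZMod p → ℂ) →ₗ[ℂ] ℂ :=
    { toFun := fun x => ∑ k : ZMod p, x k * psi p (ℓ * k)
      map_add' := by
        intro x z
        simp [add_mul, Finset.sum_add_distrib]
      map_smul' := by
        intro c x
        simp [Finset.mul_sum, mul_assoc] } with hφ
  intro htop
  have hker : Submodule.span ℂ
      {f : ZMod p → ℂ | ∃ m : (ZMod p)ˣ, m ∈ M ∧ ∃ k : ZMod p,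
        f = Tr k (Dil ((m : (ZMod p)ˣ) : ZMod p) y)} ≤ LinearMap.ker φ := by
    rw [Submodule.span_le]
    rintro f ⟨m, hm, k, rfl⟩
    have hsqrt : ((Real.sqrt p : ℂ))⁻¹ ≠ 0 := by
      have hp : (0 : ℝ) < p := by
        exact_mod_cast (Fact.out : p.Prime).pos
      have : Real.sqrt p ≠ 0 := ne_of_gt (Real.sqrt_pos.mpr hp)
      simp [this]
    have hd : dft p (Tr k (Dil ((m : ZMod p)) y)) ℓ = 0 := by
      rw [dft_Tr, dft_Dil, hℓ m hm, mul_zero]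
    rw [dft_eq] at hd
    rcases mul_eq_zero.mp hd with h | h
    · exact absurd h hsqrt
    · simpa [LinearMap.mem_ker, hφ] using h
  rw [htop, top_le_iff, LinearMap.ker_eq_top] at hker
  have : φ (Pi.single (0 : ZMod p) 1) = 1 := by
    simp only [hφ, LinearMap.coe_mk, AddHom.coe_mk]
    rw [Finset.sum_eq_single (0 : ZMod p)]
    · simp [psi_zero]
    · intro b _ hb
      simp [Pi.single_apply, hb]
    · simp
  rw [hker] at this
  simp at this
end
end
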